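/- Let (t_k)_{k∈ℕ} be an admissible sequence of real numbers with t_k → ∞ as k → ∞, and suppose t_1 − t_0 = 2^{−n₀} for some natural number n₀. Then for every positive integer l there exists k ∈ ℕ with t_k = l. -/

import Mathlib

/-- A sequence `(t k)` of reals is admissible if `t 0 = 0`, it is strictly increasing,
and each successive difference either repeats the previous one or halves it. -/
def Admissible (t : ℕ → ℝ) : Prop :=
  t 0 = 0 ∧ (∀ k, t k < t (k + 1)) ∧
    ∀ k, t (k + 2) - t (k + 1) = t (k + 1) - t k ∨
      t (k + 2) - t (k + 1) = (1 / 2) * (t (k + 1) - t k)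

/-- If `(t k)` is admissible, `t k → ∞`, and `t 1 − t 0 = 2^(−n₀)` for some
natural number `n₀`, then every positive integer `l` occurs as a value `t k = l`. -/
theorem stmt2 (t : ℕ → ℝ) (ht : Admissible t)
    (htend : Filter.Tendsto t Filter.atTop Filter.atTop)
    (n₀ : ℕ) (h₀ : t 1 - t 0 = (2 : ℝ) ^ (-(n₀ : ℤ))) :
    ∀ l : ℕ, 1 ≤ l → ∃ k : ℕ, t k = (l : ℝ) := by
  obtain ⟨h0, hmono, hstep⟩ := ht
  -- Key invariant: the step is 2^{-m} and t k is an integer multiple of it.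
  have key : ∀ k : ℕ, ∃ m : ℕ, ∃ a : ℤ,
      t (k + 1) - t k = ((2 : ℝ) ^ m)⁻¹ ∧ t k = (a : ℝ) * ((2 : ℝ) ^ m)⁻¹ := by
    intro k
    induction k with
    | zero =>
      refine ⟨n₀, 0, ?_, by simp [h0]⟩
      rw [h₀, zpow_neg, zpow_natCast]
    | succ k ih =>
      obtain ⟨m, a, hstepk, hval⟩ := ih
      have h1 : t (k + 1) = ((a : ℝ) + 1) * ((2 : ℝ) ^ m)⁻¹ := by
        have := hstepk
        linarith [hstepk, hval, sub_add_cancel (t (k+1)) (t k)]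
      rcases hstep k with h | h
      · refine ⟨m, a + 1, ?_, by push_cast; linarith⟩
        rw [h, hstepk]
      · refine ⟨m + 1, 2 * a + 2, ?_, ?_⟩
        · rw [h, hstepk, pow_succ]
          have h2 : ((2 : ℝ) ^ m) ≠ 0 := by positivity
          field_simp
        · push_cast
          rw [h1, pow_succ]
          have h2 : ((2 : ℝ) ^ m) ≠ 0 := by positivity
          field_simp
  intro l hl
  -- find the least k with l ≤ t k
  have hex : ∃ k, (l : ℝ) ≤ t k := by
    obtain ⟨k, hk⟩ := (Filter.tendsto_atTop.mp htend (l : ℝ)).exists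
    exact ⟨k, hk⟩
  classical
  set k := Nat.find hex with hkdef
  have hk : (l : ℝ) ≤ t k := Nat.find_spec hex
  have hkpos : k ≠ 0 := by
    intro h
    rw [h] at hk
    rw [h0] at hk
    have : (1 : ℝ) ≤ (l : ℝ) := by exact_mod_cast hl
    linarith
  obtain ⟨j, hkj⟩ : ∃ j, k = j + 1 := ⟨k - 1, by omega⟩
  rw [hkj] at hk
  have hj : ¬ ((l : ℝ) ≤ t j) := Nat.find_min hex (by omega)
  push_neg at hj
  obtain ⟨m, a, hstepj, hval⟩ := key j
  have hp : (0 : ℝ) < (2 : ℝ) ^ m := by positivity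
  have h1 : t (j + 1) = ((a : ℝ) + 1) * ((2 : ℝ) ^ m)⁻¹ := by
    linarith [hstepj, hval]
  -- a < l * 2^m ≤ a + 1 as integers
  have hlt : (a : ℝ) < (l : ℝ) * (2 : ℝ) ^ m := by
    have := (div_lt_iff₀ hp).mp (by rw [div_eq_mul_inv]; rw [← hval]; exact hj)
    linarith
  have hle : (l : ℝ) * (2 : ℝ) ^ m ≤ (a : ℝ) + 1 := by
    have h2 : (l : ℝ) ≤ ((a : ℝ) + 1) * ((2 : ℝ) ^ m)⁻¹ := h1 ▸ hk
    calc (l : ℝ) * (2 : ℝ) ^ m ≤ (((a : ℝ) + 1) * ((2 : ℝ) ^ m)⁻¹) * (2 : ℝ) ^ m :=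
          mul_le_mul_of_nonneg_right h2 hp.le
      _ = (a : ℝ) + 1 := by field_simp
  have hlt' : a < (l : ℤ) * 2 ^ m := by exact_mod_cast (by push_cast; exact hlt : ((a:ℤ):ℝ) < (((l : ℤ) * 2 ^ m : ℤ) : ℝ))
  have hle' : (l : ℤ) * 2 ^ m ≤ a + 1 := by exact_mod_cast (by push_cast; exact hle : (((l : ℤ) * 2 ^ m : ℤ) : ℝ) ≤ ((a + 1 : ℤ) : ℝ))
  have heq : (l : ℤ) * 2 ^ m = a + 1 := by omega
  refine ⟨j + 1, ?_⟩
  rw [h1]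
  have : ((a : ℝ) + 1) = (l : ℝ) * (2 : ℝ) ^ m := by
    have := congrArg (fun z : ℤ => (z : ℝ)) heq
    push_cast at this
    linarith
  rw [this]
  field_simp
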